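/- In the spin-orbit setting, let 𝒱 be a uniform invariant frame field with constant precession rate ν = C_𝒱 ∈ [0,1), and suppose ν ∈ {m·(1,ω) : m ∈ ℤ^{d+1}} (i.e. 0 belongs to the equivalence class of C_𝒱). Then for every φ₀ ∈ ℝ^d, every solution S : ℝ → ℝ³ of Ṡ(θ) = 𝒜(θ, ωθ+φ₀) S(θ) is componentwise quasiperiodic with tune vector (1,ω) ∈ ℝ^{d+1}. -/

import Mathlib

open MeasureTheory Filter
noncomputable section

/-- The matrix 𝒥: (2,1)-entry 1, (1,2)-entry −1, all other entries 0. -/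
def Jmat : Matrix (Fin 3) (Fin 3) ℝ := Matrix.of ![![0, -1, 0], ![1, 0, 0], ![0, 0, 0]]

/-- The special orthogonal group SO(3): RᵀR = I and det R = 1. -/
def SO3 : Set (Matrix (Fin 3) (Fin 3) ℝ) := {R | R.transpose * R = 1 ∧ R.det = 1}

/-- 2π-periodicity in each of the k arguments. -/
def Periodic2Pi {k : ℕ} {E : Type*} (F : (Fin k → ℝ) → E) : Prop :=
  ∀ (z : Fin k → ℝ) (i : Fin k), F (Function.update z i (z i + 2 * Real.pi)) = F z

/-- `f : ℝ → E` is quasiperiodic with tune vector `ν ∈ ℝ^k` if `f θ = F (νθ)` for a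
continuous `F` that is 2π-periodic in each argument. -/
def IsQuasiperiodic {E : Type*} [TopologicalSpace E] {k : ℕ} (ν : Fin k → ℝ) (f : ℝ → E) : Prop :=
  ∃ F : (Fin k → ℝ) → E, Continuous F ∧ Periodic2Pi F ∧ ∀ θ : ℝ, f θ = F fun i => ν i * θ

/-- integer dot product `m · v` -/
def zdot {k : ℕ} (m : Fin k → ℤ) (v : Fin k → ℝ) : ℝ := ∑ i, (m i : ℝ) * v i

/-- `ν` is nonresonant if `m · ν = 0` only for `m = 0`. -/
def Nonresonant {k : ℕ} (ν : Fin k → ℝ) : Prop :=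
  ∀ m : Fin k → ℤ, zdot m ν = 0 → m = 0

/-- Fourier coefficient `F_m = (2π)^{-k} ∫_{[0,2π]^k} F(z) e^{-i m·z} dz`. -/
def mFourierCoeff {k : ℕ} (F : (Fin k → ℝ) → ℂ) (m : Fin k → ℤ) : ℂ :=
  ((2 * Real.pi) ^ k : ℝ)⁻¹ •
    ∫ z in Set.Icc (0 : Fin k → ℝ) (fun _ => 2 * Real.pi),
      F z * Complex.exp (-Complex.I * ∑ i, (m i : ℝ) * z i)

/-- The phase space `ℝ × ℝ^d` of pairs `(θ, φ)`. -/
abbrev Pt (d : ℕ) := ℝ × (Fin d → ℝ)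

/-- The vector `(1, ω) ∈ ℝ^{d+1}`. -/
def oneOmega {d : ℕ} (ω : Fin d → ℝ) : Fin (d + 1) → ℝ := Fin.cons 1 ω

/-- max norm `‖m‖ = max_i |m_i|` of an integer vector. -/
def intNorm {k : ℕ} (m : Fin k → ℤ) : ℕ := Finset.univ.sup fun i => (m i).natAbs

/-- The Diophantine set `Ω(τ) = ⋃_{γ ∈ (0,1]} Ω(τ,γ)` where
`Ω(τ,γ) = {ω : |m·(1,ω)| ≥ γ‖m‖^{-τ} for all nonzero m ∈ ℤ^{d+1}}`. -/
def DiophSet (d : ℕ) (τ : ℝ) : Set (Fin d → ℝ) :=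
  ⋃ γ ∈ Set.Ioc (0 : ℝ) 1,
    {ω | ∀ m : Fin (d + 1) → ℤ, m ≠ 0 → γ * (intNorm m : ℝ) ^ (-τ) ≤ |zdot m (oneOmega ω)|}

/-- The derivation 𝒟 applied to the entries of a matrix-valued function:
`(𝒟V)(p) = ∂_θ V + ω·∇_φ V`, i.e. the directional derivative along `(1, ω)`. -/
def Dmat {d : ℕ} (ω : Fin d → ℝ) (V : Pt d → Matrix (Fin 3) (Fin 3) ℝ) (p : Pt d) :
    Matrix (Fin 3) (Fin 3) ℝ :=
  Matrix.of fun i j => fderiv ℝ (fun q => V q i j) p (1, ω)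

/-- Periodicity: 2π-periodic in θ and in each component of φ. -/
def PeriodicPt {d : ℕ} {E : Type*} (f : Pt d → E) : Prop :=
  (∀ p : Pt d, f (p.1 + 2 * Real.pi, p.2) = f p) ∧
  (∀ (p : Pt d) (i : Fin d), f (p.1, Function.update p.2 i (p.2 i + 2 * Real.pi)) = f p)

/-- A matrix-valued map on `ℝ × ℝ^d` is of class `C^n` (entrywise). -/
def SmoothMat {d : ℕ} (n : ℕ∞) (V : Pt d → Matrix (Fin 3) (Fin 3) ℝ) : Prop :=
  ∀ i j, ContDiff ℝ n fun p => V p i j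

/-- `Φ` is the principal solution matrix at `φ₀`:
`∂_θ Φ(θ) = 𝒜(θ, ωθ + φ₀) Φ(θ)`, `Φ(0) = I`. -/
def IsPrincipalSolution {d : ℕ} (ω : Fin d → ℝ) (𝒜 : Pt d → Matrix (Fin 3) (Fin 3) ℝ)
    (φ₀ : Fin d → ℝ) (Φ : ℝ → Matrix (Fin 3) (Fin 3) ℝ) : Prop :=
  Φ 0 = 1 ∧ ∀ (θ : ℝ) (i j : Fin 3),
    HasDerivAt (fun t => Φ t i j) ((𝒜 (θ, fun l => ω l * θ + φ₀ l) * Φ θ) i j) θ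

/-- A uniform invariant frame field: C¹, 2π-periodic, SO(3)-valued, satisfying
`𝒟𝒱 = 𝒜𝒱 − ν𝒱𝒥` for a constant `ν ∈ [0,1)`. -/
def IsUniformIFF {d : ℕ} (ω : Fin d → ℝ) (𝒜 V : Pt d → Matrix (Fin 3) (Fin 3) ℝ) (ν : ℝ) :
    Prop :=
  SmoothMat 1 V ∧ PeriodicPt V ∧ (∀ p, V p ∈ SO3) ∧ ν ∈ Set.Ico (0 : ℝ) 1 ∧
  ∀ p, Dmat ω V p = 𝒜 p * V p - ν • (V p * Jmat)

/-- An invariant frame field: C¹, 2π-periodic, SO(3)-valued, whose third column 𝔳³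
satisfies `𝒟𝔳³ = 𝒜𝔳³`. -/
def IsIFF {d : ℕ} (ω : Fin d → ℝ) (𝒜 V : Pt d → Matrix (Fin 3) (Fin 3) ℝ) : Prop :=
  SmoothMat 1 V ∧ PeriodicPt V ∧ (∀ p, V p ∈ SO3) ∧
  ∀ (p : Pt d) (i : Fin 3),
    fderiv ℝ (fun q => V q i 2) p (1, ω) = ((𝒜 p).mulVec fun j => V p j 2) i

/-- An invariant spin field: C¹, 2π-periodic, unit length, satisfying `𝒟n = 𝒜n`. -/
def IsISF {d : ℕ} (ω : Fin d → ℝ) (𝒜 : Pt d → Matrix (Fin 3) (Fin 3) ℝ)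
    (n : Pt d → Fin 3 → ℝ) : Prop :=
  (∀ i, ContDiff ℝ 1 fun p => n p i) ∧ PeriodicPt n ∧ (∀ p, ∑ i, n p i ^ 2 = 1) ∧
  ∀ (p : Pt d) (i : Fin 3), fderiv ℝ (fun q => n q i) p (1, ω) = ((𝒜 p).mulVec (n p)) i

/-- cross product on ℝ³ -/
def cross3 (u v : Fin 3 → ℝ) : Fin 3 → ℝ :=
  ![u 1 * v 2 - u 2 * v 1, u 2 * v 0 - u 0 * v 2, u 0 * v 1 - u 1 * v 0]

/-- Euclidean norm on ℝ³ -/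
def nrm3 (v : Fin 3 → ℝ) : ℝ := Real.sqrt (∑ i, v i ^ 2)

/-- normalization of a vector in ℝ³ -/
def unitize (v : Fin 3 → ℝ) : Fin 3 → ℝ := fun i => v i / nrm3 v

/-- the matrix with columns a, b, c -/
def colMat (a b c : Fin 3 → ℝ) : Matrix (Fin 3) (Fin 3) ℝ := (Matrix.of ![a, b, c]).transpose

/-!
Along the orbit `θ ↦ (θ, ωθ + φ₀)`, the matrix `W θ = 𝒱 (θ, ωθ + φ₀) * Rot (ν θ)` solves
`Ẇ = 𝒜 W`: the precession term `-ν 𝒱 𝒥` is cancelled by the rotation generated by `𝒥`.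
As `W` is orthogonal and `𝒜` is skew, `Wᵀ S` is constant, so `S θ = W θ c`. Writing
`ν = m · (1, ω)`, both `𝒱 (z₀, z' + φ₀)` and `Rot (m · z)` are `2π`-periodic continuous functions
of `z ∈ ℝ^{d+1}`, and at `z = (1, ω) θ` they give the two factors of `W θ`.
-/

open Matrix

section MatrixCalculus

variable {l m n : Type*} [Fintype m] {θ : ℝ}

theorem hasDerivAt_matrix_mul_apply {M : ℝ → Matrix l m ℝ} {N : ℝ → Matrix m n ℝ}
    {M' : Matrix l m ℝ} {N' : Matrix m n ℝ}
    (hM : ∀ i j, HasDerivAt (fun t => M t i j) (M' i j) θ)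
    (hN : ∀ i j, HasDerivAt (fun t => N t i j) (N' i j) θ) (i : l) (j : n) :
    HasDerivAt (fun t => (M t * N t) i j) ((M' * N θ + M θ * N') i j) θ := by
  simp only [mul_apply, Matrix.add_apply, ← Finset.sum_add_distrib]
  exact HasDerivAt.fun_sum fun k _ => (hM i k).mul (hN k j)

theorem hasDerivAt_transpose_mulVec {W : ℝ → Matrix m n ℝ} {S : ℝ → m → ℝ}
    {W' : Matrix m n ℝ} {S' : m → ℝ}
    (hW : ∀ i j, HasDerivAt (fun t => W t i j) (W' i j) θ) (hS : HasDerivAt S S' θ) :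
    HasDerivAt (fun t => (W t)ᵀ *ᵥ S t) (W'ᵀ *ᵥ S θ + (W θ)ᵀ *ᵥ S') θ := by
  refine hasDerivAt_pi.2 fun k => ?_
  simp only [mulVec, dotProduct, transpose_apply, Pi.add_apply, ← Finset.sum_add_distrib]
  exact HasDerivAt.fun_sum fun j _ => (hW j k).mul (hasDerivAt_pi.1 hS j)

end MatrixCalculus

section SkewFlow

variable {n : Type*} [Fintype n] {A W : ℝ → Matrix n n ℝ} {S : ℝ → n → ℝ}

theorem transpose_mulVec_eq_of_skew (hA : ∀ t, (A t)ᵀ = -A t)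
    (hW : ∀ t i j, HasDerivAt (fun s => W s i j) ((A t * W t) i j) t)
    (hS : ∀ t, HasDerivAt S (A t *ᵥ S t) t) (t : ℝ) :
    (W t)ᵀ *ᵥ S t = (W 0)ᵀ *ᵥ S 0 := by
  have hderiv : ∀ t, HasDerivAt (fun s => (W s)ᵀ *ᵥ S s) 0 t := by
    intro t
    convert hasDerivAt_transpose_mulVec (hW t) (hS t) using 1
    rw [transpose_mul, hA, ← mulVec_mulVec, neg_mulVec, mulVec_neg, neg_add_cancel]
  exact is_const_of_deriv_eq_zero (fun s => (hderiv s).differentiableAt)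
    (fun s => (hderiv s).deriv) t 0

theorem eq_mulVec_of_skew [DecidableEq n] (hA : ∀ t, (A t)ᵀ = -A t)
    (hW : ∀ t i j, HasDerivAt (fun s => W s i j) ((A t * W t) i j) t)
    (hWorth : ∀ t, W t ∈ orthogonalGroup n ℝ)
    (hS : ∀ t, HasDerivAt S (A t *ᵥ S t) t) (t : ℝ) :
    S t = W t *ᵥ ((W 0)ᵀ *ᵥ S 0) := by
  rw [← transpose_mulVec_eq_of_skew hA hW hS t, mulVec_mulVec,
    (mem_orthogonalGroup_iff n ℝ).1 (hWorth t), one_mulVec]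

end SkewFlow

def Rot (t : ℝ) : Matrix (Fin 3) (Fin 3) ℝ :=
  !![Real.cos t, -Real.sin t, 0; Real.sin t, Real.cos t, 0; 0, 0, 1]

theorem hasDerivAt_rot_apply (t : ℝ) (i j : Fin 3) :
    HasDerivAt (fun s => Rot s i j) ((Jmat * Rot t) i j) t := by
  fin_cases i <;> fin_cases j <;>
    simp [Rot, Jmat, mul_apply, Fin.sum_univ_three] <;>
    first
      | exact hasDerivAt_const _ _
      | simpa using Real.hasDerivAt_cos t
      | exact Real.hasDerivAt_sin t
      | exact (Real.hasDerivAt_sin t).neg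

theorem continuous_rot : Continuous Rot :=
  continuous_matrix fun i j => by fin_cases i <;> fin_cases j <;> simp [Rot] <;> fun_prop

theorem rot_add_int_mul_two_pi (t : ℝ) (k : ℤ) : Rot (t + k * (2 * Real.pi)) = Rot t := by
  simp [Rot, Real.cos_add_int_mul_two_pi, Real.sin_add_int_mul_two_pi]

theorem rot_mem_orthogonalGroup (t : ℝ) : Rot t ∈ orthogonalGroup (Fin 3) ℝ := by
  rw [mem_orthogonalGroup_iff]
  ext i j
  fin_cases i <;> fin_cases j <;>
    simp [Rot, mul_apply, Fin.sum_univ_three] <;>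
    nlinarith [Real.sin_sq_add_cos_sq t]

section Orbit

variable {d : ℕ} (ω φ₀ : Fin d → ℝ)

def orbit (θ : ℝ) : Pt d := (θ, fun l => ω l * θ + φ₀ l)

theorem hasDerivAt_orbit (θ : ℝ) : HasDerivAt (orbit ω φ₀) (1, ω) θ :=
  (hasDerivAt_id θ).prodMk <| hasDerivAt_pi.2 fun l => by
    simpa using ((hasDerivAt_id θ).const_mul (ω l)).add_const (φ₀ l)

variable {ω φ₀}

theorem DifferentiableAt.hasDerivAt_comp_orbit {f : Pt d → ℝ} {θ : ℝ}
    (hf : DifferentiableAt ℝ f (orbit ω φ₀ θ)) :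
    HasDerivAt (fun t => f (orbit ω φ₀ t)) (fderiv ℝ f (orbit ω φ₀ θ) (1, ω)) θ :=
  hf.hasFDerivAt.comp_hasDerivAt θ (hasDerivAt_orbit ω φ₀ θ)

theorem hasDerivAt_frame_mul_rot_apply {𝒜 V : Pt d → Matrix (Fin 3) (Fin 3) ℝ} {ν : ℝ}
    (hV : SmoothMat 1 V) (hVD : ∀ p, Dmat ω V p = 𝒜 p * V p - ν • (V p * Jmat))
    (θ : ℝ) (i j : Fin 3) :
    HasDerivAt (fun t => (V (orbit ω φ₀ t) * Rot (ν * t)) i j)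
      ((𝒜 (orbit ω φ₀ θ) * (V (orbit ω φ₀ θ) * Rot (ν * θ))) i j) θ := by
  have hVorbit : ∀ i j, HasDerivAt (fun t => V (orbit ω φ₀ t) i j)
      (Dmat ω V (orbit ω φ₀ θ) i j) θ := fun i j =>
    DifferentiableAt.hasDerivAt_comp_orbit ((hV i j).differentiable one_ne_zero _)
  have hRot : ∀ i j, HasDerivAt (fun t => Rot (ν * t) i j) ((ν • (Jmat * Rot (ν * θ))) i j) θ :=
    fun i j => by
      simpa [mul_comm, Function.comp_def] using (hasDerivAt_rot_apply (ν * θ) i j).comp θ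
        ((hasDerivAt_id θ).const_mul ν)
  convert hasDerivAt_matrix_mul_apply hVorbit hRot i j using 2
  rw [hVD, sub_mul, Matrix.mul_smul, smul_mul, Matrix.mul_assoc, Matrix.mul_assoc,
    sub_add_cancel]

end Orbit

section Quasiperiodic

variable {k : ℕ}

theorem IsQuasiperiodic.map₂ {E₁ E₂ E : Type*} [TopologicalSpace E₁] [TopologicalSpace E₂]
    [TopologicalSpace E] {ν : Fin k → ℝ} {f : ℝ → E₁} {g : ℝ → E₂} {op : E₁ → E₂ → E}
    (hf : IsQuasiperiodic ν f) (hg : IsQuasiperiodic ν g) (hop : Continuous (Function.uncurry op)) :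
    IsQuasiperiodic ν fun θ => op (f θ) (g θ) := by
  obtain ⟨F, hFc, hFp, hfF⟩ := hf
  obtain ⟨G, hGc, hGp, hgG⟩ := hg
  exact ⟨fun z => op (F z) (G z), hop.comp (hFc.prodMk hGc),
    fun z i => by simp only [hFp z i, hGp z i], fun θ => by simp only [hfF, hgG]⟩

theorem zdot_update_add_two_pi (m : Fin k → ℤ) (z : Fin k → ℝ) (i : Fin k) :
    zdot m (Function.update z i (z i + 2 * Real.pi)) = zdot m z + m i * (2 * Real.pi) := by
  have hupdate : Function.update z i (z i + 2 * Real.pi) = z + Pi.single i (2 * Real.pi) := by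
    ext j
    rcases eq_or_ne j i with rfl | hj <;> simp [*]
  simp [zdot, hupdate, mul_add, Finset.sum_add_distrib, Pi.single_apply]

theorem zdot_mul_right (m : Fin k → ℤ) (ν : Fin k → ℝ) (θ : ℝ) :
    zdot m (fun i => ν i * θ) = zdot m ν * θ := by
  simp only [zdot, Finset.sum_mul, mul_assoc]

theorem isQuasiperiodic_rot_zdot (m : Fin k → ℤ) (ν : Fin k → ℝ) :
    IsQuasiperiodic ν fun θ => Rot (zdot m ν * θ) :=
  ⟨fun z => Rot (zdot m z), continuous_rot.comp (by unfold zdot; fun_prop),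
    fun z i => by simp only [zdot_update_add_two_pi, rot_add_int_mul_two_pi],
    fun θ => by simp only [zdot_mul_right]⟩

theorem PeriodicPt.isQuasiperiodic_comp_orbit {d : ℕ} {E : Type*} [TopologicalSpace E]
    {f : Pt d → E} (hf : PeriodicPt f) (hfc : Continuous f) (ω φ₀ : Fin d → ℝ) :
    IsQuasiperiodic (oneOmega ω) fun θ => f (orbit ω φ₀ θ) := by
  refine ⟨fun z => f (z 0, fun l => z l.succ + φ₀ l), hfc.comp (by fun_prop), ?_, ?_⟩
  · intro z i
    induction i using Fin.cases with
    | zero =>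
      simpa [Function.update_of_ne (Fin.succ_ne_zero _)] using
        hf.1 (z 0, fun l => z l.succ + φ₀ l)
    | succ i =>
      convert hf.2 (z 0, fun l => z l.succ + φ₀ l) i using 2
      refine Prod.ext (by simp [(Fin.succ_ne_zero i).symm]) (funext fun l => ?_)
      rcases eq_or_ne l i with rfl | hl
      · simp only [Function.update_self]
        ring
      · simp [hl]
  · intro θ
    simp [orbit, oneOmega]

end Quasiperiodic

theorem resonant_uniform_IFF_gives_quasiperiodic_spin_general {d : ℕ}
    (ω : Fin d → ℝ)
    (𝒜 : Pt d → Matrix (Fin 3) (Fin 3) ℝ)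
    (h𝒜skew : ∀ p, (𝒜 p).transpose = -(𝒜 p))
    (𝒱 : Pt d → Matrix (Fin 3) (Fin 3) ℝ) (ν : ℝ)
    (h𝒱 : IsUniformIFF ω 𝒜 𝒱 ν)
    (hres : ∃ m : Fin (d + 1) → ℤ, ν = zdot m (oneOmega ω)) :
    ∀ (φ₀ : Fin d → ℝ) (S : ℝ → Fin 3 → ℝ),
      (∀ θ : ℝ, HasDerivAt S ((𝒜 (θ, fun l => ω l * θ + φ₀ l)).mulVec (S θ)) θ) →
      ∀ i, IsQuasiperiodic (oneOmega ω) fun θ => S θ i := by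
  obtain ⟨h𝒱s, h𝒱per, h𝒱SO, -, h𝒱D⟩ := h𝒱
  obtain ⟨m, rfl⟩ := hres
  intro φ₀ S hS i
  set W := fun θ => 𝒱 (orbit ω φ₀ θ) * Rot (zdot m (oneOmega ω) * θ)
  have hW_orth : ∀ θ, W θ ∈ orthogonalGroup (Fin 3) ℝ := fun _ =>
    mul_mem ((mem_orthogonalGroup_iff' _ _).2 (h𝒱SO _).1) (rot_mem_orthogonalGroup _)
  obtain ⟨c, hSW⟩ : ∃ c, ∀ θ, S θ = W θ *ᵥ c :=
    ⟨_, eq_mulVec_of_skew (fun _ => h𝒜skew _) (hasDerivAt_frame_mul_rot_apply h𝒱s h𝒱D) hW_orth hS⟩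
  have h𝒱c : Continuous 𝒱 := continuous_matrix fun i j => (h𝒱s i j).continuous
  have hq := (h𝒱per.isQuasiperiodic_comp_orbit h𝒱c ω φ₀).map₂
    (isQuasiperiodic_rot_zdot m (oneOmega ω)) (op := fun V R => ((V * R) *ᵥ c) i) (by fun_prop)
  simpa only [hSW] using hq

/-- Theorem 9.1a. -/
theorem resonant_uniform_IFF_gives_quasiperiodic_spin {d : ℕ} (hd : 1 ≤ d)
    (ω : Fin d → ℝ)
    (𝒜 : Pt d → Matrix (Fin 3) (Fin 3) ℝ)
    (h𝒜s : SmoothMat 1 𝒜) (h𝒜skew : ∀ p, (𝒜 p).transpose = -(𝒜 p))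
    (h𝒜per : PeriodicPt 𝒜)
    (𝒱 : Pt d → Matrix (Fin 3) (Fin 3) ℝ) (ν : ℝ)
    (h𝒱 : IsUniformIFF ω 𝒜 𝒱 ν)
    (hres : ∃ m : Fin (d + 1) → ℤ, ν = zdot m (oneOmega ω)) :
    ∀ (φ₀ : Fin d → ℝ) (S : ℝ → Fin 3 → ℝ),
      (∀ θ : ℝ, HasDerivAt S ((𝒜 (θ, fun l => ω l * θ + φ₀ l)).mulVec (S θ)) θ) →
      ∀ i, IsQuasiperiodic (oneOmega ω) fun θ => S θ i :=
  resonant_uniform_IFF_gives_quasiperiodic_spin_general ω 𝒜 h𝒜skew 𝒱 ν h𝒱 hres
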